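/- arXiv:1809.09320 — 11 statements merged into one kernel-verified Lean document; each statement's English description precedes it below -/
import Mathlib

section
/- If (a(n)) and (b(n)) are k-projective sequences with values in a field K, then the pointwise product (a(n)·b(n)) is also a k-projective sequence. -/
/-- A sequence `a : ℕ → K` is `k`-projective if there is a bound `d` (independent of `e`)
such that for every `e`, every section `n ↦ a (k^e * n + j)` with `j < k^e` lies in a
`K`-submodule of sequences generated by `d` sequences. -/
def kProjective (k : ℕ) (K : Type*) [Field K] (a : ℕ → K) : Prop :=
  ∃ d : ℕ, ∀ e : ℕ, ∃ g : Fin d → (ℕ → K),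
    ∀ j < k ^ e, (fun n => a (k ^ e * n + j)) ∈ Submodule.span K (Set.range g)

private lemma mul_mem_span_prod {K : Type*} [Field K] {ι κ : Type*}
    (g : ι → ℕ → K) (h : κ → ℕ → K) {u v : ℕ → K}
    (hu : u ∈ Submodule.span K (Set.range g))
    (hv : v ∈ Submodule.span K (Set.range h)) :
    (fun n => u n * v n) ∈
      Submodule.span K (Set.range fun p : ι × κ => fun n => g p.1 n * h p.2 n) := by
  induction hu using Submodule.span_induction with
  | mem x hx =>
    obtain ⟨i, rfl⟩ := hx
    induction hv using Submodule.span_induction with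
    | mem y hy =>
      obtain ⟨j, rfl⟩ := hy
      exact Submodule.subset_span ⟨(i, j), rfl⟩
    | zero =>
      have : (fun n => g i n * (0 : ℕ → K) n) = 0 := by
        funext n; simp
      rw [this]; exact Submodule.zero_mem _
    | add x y _ _ ihx ihy =>
      have : (fun n => g i n * (x + y) n) =
          (fun n => g i n * x n) + (fun n => g i n * y n) := by
        funext n; simp [mul_add]
      rw [this]; exact Submodule.add_mem _ ihx ihy
    | smul c x _ ih =>
      have : (fun n => g i n * (c • x) n) = c • (fun n => g i n * x n) := by
        funext n; simp [mul_left_comm]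
      rw [this]; exact Submodule.smul_mem _ _ ih
  | zero =>
    have : (fun n => (0 : ℕ → K) n * v n) = 0 := by funext n; simp
    rw [this]; exact Submodule.zero_mem _
  | add x y _ _ ihx ihy =>
    have : (fun n => (x + y) n * v n) =
        (fun n => x n * v n) + (fun n => y n * v n) := by
      funext n; simp [add_mul]
    rw [this]; exact Submodule.add_mem _ ihx ihy
  | smul c x _ ih =>
    have : (fun n => (c • x) n * v n) = c • (fun n => x n * v n) := by
      funext n; simp [mul_assoc]
    rw [this]; exact Submodule.smul_mem _ _ ih

theorem kProjective_mul {K : Type*} [Field K] {k : ℕ} (hk : 2 ≤ k) {a b : ℕ → K}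
    (ha : kProjective k K a) (hb : kProjective k K b) :
    kProjective k K (fun n => a n * b n) := by
  obtain ⟨d1, h1⟩ := ha
  obtain ⟨d2, h2⟩ := hb
  refine ⟨d1 * d2, fun e => ?_⟩
  obtain ⟨g1, hg1⟩ := h1 e
  obtain ⟨g2, hg2⟩ := h2 e
  refine ⟨fun p => fun n =>
    g1 (finProdFinEquiv.symm p).1 n * g2 (finProdFinEquiv.symm p).2 n, fun j hj => ?_⟩
  have hrange : (Set.range fun p : Fin (d1 * d2) => fun n =>
      g1 (finProdFinEquiv.symm p).1 n * g2 (finProdFinEquiv.symm p).2 n) =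
      Set.range fun p : Fin d1 × Fin d2 => fun n => g1 p.1 n * g2 p.2 n := by
    exact Function.Surjective.range_comp
      (finProdFinEquiv (m := d1) (n := d2)).symm.surjective
      (fun p : Fin d1 × Fin d2 => fun n => g1 p.1 n * g2 p.2 n)
  rw [hrange]
  exact mul_mem_span_prod g1 g2 (hg1 j hj) (hg2 j hj)
end

section
/- If (a(n)) is a k-projective sequence with values in a field K, then for any natural numbers N and l with l ≥ 1, the arithmetic subsequence (a(N + l·n))_{n≥0} is also a k-projective sequence. -/
theorem kProjective_arith {K : Type*} [Field K] {k : ℕ} (hk : 2 ≤ k) {a : ℕ → K}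
    (ha : kProjective k K a) (N l : ℕ) (hl : 1 ≤ l) :
    kProjective k K (fun n => a (N + l * n)) := by
  obtain ⟨d, hd⟩ := ha
  refine ⟨d * (N + l + 1), fun e => ?_⟩
  obtain ⟨g, hg⟩ := hd e
  set g' : Fin (d * (N + l + 1)) → (ℕ → K) := fun i =>
    fun n => g (finProdFinEquiv.symm i).1 (l * n + (finProdFinEquiv.symm i).2) with hg'
  refine ⟨g', ?_⟩
  intro j hj
  have hkpos : 0 < k ^ e := pow_pos (by omega) e
  set q := (N + l * j) / k ^ e with hq
  set r := (N + l * j) % k ^ e with hr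
  have hqr : k ^ e * q + r = N + l * j := Nat.div_add_mod _ _
  have hrlt : r < k ^ e := Nat.mod_lt _ hkpos
  have hqlt : q < N + l + 1 := by
    rw [hq, Nat.div_lt_iff_lt_mul hkpos]
    have h1 : l * (j + 1) ≤ l * k ^ e := Nat.mul_le_mul_left l hj
    have h2 : N * 1 ≤ N * k ^ e := Nat.mul_le_mul_left N hkpos
    nlinarith
  have hmem := hg r hrlt
  set L : (ℕ → K) →ₗ[K] (ℕ → K) := LinearMap.funLeft K K (fun n => l * n + q) with hL
  have h2 : L (fun n => a (k ^ e * n + r)) ∈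
      Submodule.map L (Submodule.span K (Set.range g)) :=
    Submodule.mem_map_of_mem hmem
  rw [Submodule.map_span] at h2
  have hsub : L '' Set.range g ⊆ Set.range g' := by
    rintro _ ⟨_, ⟨i, rfl⟩, rfl⟩
    refine ⟨finProdFinEquiv (i, ⟨q, hqlt⟩), ?_⟩
    simp only [hg', Equiv.symm_apply_apply, hL, LinearMap.funLeft_apply]
    rfl
  have h3 := Submodule.span_mono hsub h2
  convert h3 using 1
  funext n
  have key : k ^ e * (l * n + q) + r = N + l * (k ^ e * n + j) := by
    rw [Nat.mul_add, add_assoc, hqr]; ring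
  simp [hL, LinearMap.funLeft, key]
end

section
/- The set of k-projective series, i.e., formal power series Σ a(n) z^n with (a(n)) a k-projective sequence over a field K, forms a subring of K[[z]] (closed under addition and multiplication, and containing 0 and 1). -/
open Submodule Set PowerSeries

lemma Submodule.mul_mem_span_range_mul {R A : Type*} [CommSemiring R] [Semiring A]
    [Module R A] [SMulCommClass R A A] [IsScalarTower R A A] {ι κ : Type*} {G : ι → A}
    {H : κ → A} {u v : A} (hu : u ∈ span R (range G)) (hv : v ∈ span R (range H)) :
    u * v ∈ span R (range fun p : ι × κ => G p.1 * H p.2) := by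
  simpa only [map₂_span_span, image2_range, LinearMap.mul_apply'] using
    apply_mem_map₂ (LinearMap.mul R A) hu hv

namespace PowerSeries

variable {R : Type*} [CommRing R]

noncomputable def coeffLinearEquiv : R⟦X⟧ ≃ₗ[R] (ℕ → R) where
  toFun f n := coeff n f
  invFun := mk
  map_add' _ _ := by ext; simp
  map_smul' _ _ := by ext; simp
  left_inv f := by ext; simp
  right_inv a := by ext; simp

noncomputable def cartier (m j : ℕ) : R⟦X⟧ →ₗ[R] R⟦X⟧ where
  toFun f := mk fun n => coeff (m * n + j) f
  map_add' _ _ := by ext; simp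
  map_smul' _ _ := by ext; simp

@[simp]
lemma coeff_cartier (m j n : ℕ) (f : R⟦X⟧) : coeff n (cartier m j f) = coeff (m * n + j) f := by
  simp [cartier]

lemma ext_cartier {m : ℕ} (hm : m ≠ 0) {f g : R⟦X⟧}
    (h : ∀ j < m, cartier m j f = cartier m j g) : f = g := by
  ext N
  have := congrArg (coeff (N / m)) (h (N % m) (Nat.mod_lt N (Nat.pos_of_ne_zero hm)))
  simpa only [coeff_cartier, Nat.div_add_mod] using this

lemma cartier_X_pow_mul_expand {m j : ℕ} (hm : m ≠ 0) (hj : j < m) (r : ℕ) (h : R⟦X⟧) :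
    cartier m j (X ^ r * expand m hm h) = if r % m = j then X ^ (r / m) * h else 0 := by
  by_cases hrj : r % m = j
  · obtain ⟨q, rfl⟩ : ∃ q, r = m * q + j := ⟨r / m, by rw [← hrj, Nat.div_add_mod]⟩
    rw [if_pos hrj, Nat.mul_add_div (Nat.pos_of_ne_zero hm), Nat.div_eq_of_lt hj, add_zero]
    ext n
    rw [coeff_cartier, coeff_X_pow_mul', coeff_X_pow_mul']
    by_cases hq : q ≤ n
    · rw [if_pos (by nlinarith), if_pos hq,
        show m * n + j - (m * q + j) = m * (n - q) by rw [Nat.mul_sub]; omega, coeff_expand_mul]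
    · rw [if_neg (by nlinarith), if_neg hq]
  · rw [if_neg hrj]
    ext n
    rw [coeff_cartier, coeff_X_pow_mul', map_zero]
    split_ifs with hr
    · refine coeff_expand_of_not_dvd m hm h fun hdvd => hrj ?_
      rw [(Nat.modEq_iff_dvd' hr).mpr hdvd, Nat.mul_add_mod, Nat.mod_eq_of_lt hj]
    · rfl

lemma cartier_one {m j : ℕ} (hj : j < m) : cartier m j (1 : R⟦X⟧) = if j = 0 then 1 else 0 := by
  have hm : m ≠ 0 := by omega
  simpa [Nat.zero_mod, eq_comm] using cartier_X_pow_mul_expand hm hj 0 (1 : R⟦X⟧)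

lemma sum_X_pow_mul_expand_cartier {m : ℕ} (hm : m ≠ 0) (f : R⟦X⟧) :
    ∑ i ∈ Finset.range m, X ^ i * expand m hm (cartier m i f) = f := by
  refine ext_cartier hm fun j hj => ?_
  rw [map_sum, Finset.sum_eq_single_of_mem j (Finset.mem_range.2 hj)]
  · simp [cartier_X_pow_mul_expand hm hj, Nat.mod_eq_of_lt hj, Nat.div_eq_of_lt hj]
  · intro i hi hij
    rw [cartier_X_pow_mul_expand hm hj, Nat.mod_eq_of_lt (Finset.mem_range.1 hi), if_neg hij]

lemma cartier_mul_mem_span {m j : ℕ} (hj : j < m) {f g : R⟦X⟧} {ι κ : Type*}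
    {G : ι → R⟦X⟧} {H : κ → R⟦X⟧}
    (hf : ∀ i < m, cartier m i f ∈ span R (range G))
    (hg : ∀ i < m, cartier m i g ∈ span R (range H)) :
    cartier m j (f * g) ∈
      span R (range fun p : (Fin 2 × ι) × κ => X ^ (p.1.1 : ℕ) * G p.1.2 * H p.2) := by
  have hm : m ≠ 0 := by omega
  rw [← sum_X_pow_mul_expand_cartier hm f, ← sum_X_pow_mul_expand_cartier hm g,
    Finset.sum_mul_sum]
  simp only [map_sum]
  refine sum_mem fun i hi => sum_mem fun l hl => ?_
  rw [Finset.mem_range] at hi hl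
  rw [show X ^ i * expand m hm (cartier m i f) * (X ^ l * expand m hm (cartier m l g)) =
      X ^ (i + l) * expand m hm (cartier m i f * cartier m l g) by rw [map_mul]; ring,
    cartier_X_pow_mul_expand hm hj, ← mul_assoc]
  split_ifs
  · have hq : (i + l) / m < 2 := Nat.div_lt_of_lt_mul (by omega)
    have hX : X ^ ((i + l) / m) ∈ span R (range fun q : Fin 2 => (X : R⟦X⟧) ^ (q : ℕ)) :=
      subset_span ⟨⟨_, hq⟩, rfl⟩
    have hXf := mul_mem_span_range_mul hX (hf i hi)
    exact (mul_mem_span_range_mul hXf (hg l hl) :)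
  · exact zero_mem _

variable (k : ℕ)

def IsKProjective (f : R⟦X⟧) : Prop :=
  ∃ (ι : Type) (_ : Finite ι), ∀ e : ℕ, ∃ G : ι → R⟦X⟧,
    ∀ j < k ^ e, cartier (k ^ e) j f ∈ span R (range G)

variable {k}

lemma isKProjective_zero : IsKProjective k (0 : R⟦X⟧) :=
  ⟨Empty, inferInstance, fun _ => ⟨Empty.elim, fun _ _ => by simp⟩⟩

lemma isKProjective_one : IsKProjective k (1 : R⟦X⟧) := by
  refine ⟨Unit, inferInstance, fun e => ⟨fun _ => 1, fun j hj => ?_⟩⟩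
  rw [cartier_one hj]
  split_ifs
  · exact subset_span ⟨(), rfl⟩
  · exact zero_mem _

lemma IsKProjective.neg {f : R⟦X⟧} (hf : IsKProjective k f) : IsKProjective k (-f) := by
  obtain ⟨ι, hι, hf⟩ := hf
  refine ⟨ι, hι, fun e => ?_⟩
  obtain ⟨G, hG⟩ := hf e
  exact ⟨G, fun j hj => by simpa only [map_neg, neg_mem_iff] using hG j hj⟩

lemma IsKProjective.add {f g : R⟦X⟧} (hf : IsKProjective k f) (hg : IsKProjective k g) :
    IsKProjective k (f + g) := by
  obtain ⟨ι, hι, hf⟩ := hf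
  obtain ⟨κ, hκ, hg⟩ := hg
  refine ⟨ι ⊕ κ, inferInstance, fun e => ?_⟩
  obtain ⟨G, hG⟩ := hf e
  obtain ⟨H, hH⟩ := hg e
  refine ⟨Sum.elim G H, fun j hj => ?_⟩
  rw [map_add]
  exact add_mem (span_mono (range_comp_subset_range Sum.inl _) (hG j hj))
    (span_mono (range_comp_subset_range Sum.inr _) (hH j hj))

lemma IsKProjective.mul {f g : R⟦X⟧} (hf : IsKProjective k f) (hg : IsKProjective k g) :
    IsKProjective k (f * g) := by
  obtain ⟨ι, hι, hf⟩ := hf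
  obtain ⟨κ, hκ, hg⟩ := hg
  refine ⟨(Fin 2 × ι) × κ, inferInstance, fun e => ?_⟩
  obtain ⟨G, hG⟩ := hf e
  obtain ⟨H, hH⟩ := hg e
  exact ⟨_, fun j hj => cartier_mul_mem_span hj hG hH⟩

variable (R k) in
def kProjectiveSubring : Subring R⟦X⟧ where
  carrier := {f | IsKProjective k f}
  zero_mem' := isKProjective_zero
  one_mem' := isKProjective_one
  add_mem' := IsKProjective.add
  mul_mem' := IsKProjective.mul
  neg_mem' := IsKProjective.neg

lemma isKProjective_mk_iff {K : Type*} [Field K] {a : ℕ → K} :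
    IsKProjective k (mk a) ↔ kProjective k K a := by
  have hsec (m j : ℕ) : coeffLinearEquiv (cartier m j (mk a)) = fun n => a (m * n + j) := by
    ext n; simp [coeffLinearEquiv]
  constructor
  · rintro ⟨ι, hι, h⟩
    refine ⟨Nat.card ι, fun e => ?_⟩
    obtain ⟨G, hG⟩ := h e
    refine ⟨coeffLinearEquiv ∘ G ∘ (Finite.equivFin ι).symm, fun j hj => ?_⟩
    rw [range_comp, EquivLike.range_comp, ← hsec]
    exact apply_mem_span_image_of_mem_span coeffLinearEquiv.toLinearMap (hG j hj)
  · rintro ⟨d, h⟩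
    refine ⟨Fin d, inferInstance, fun e => ?_⟩
    obtain ⟨g, hg⟩ := h e
    refine ⟨coeffLinearEquiv.symm ∘ g, fun j hj => ?_⟩
    rw [range_comp, ← coeffLinearEquiv.symm_apply_apply (cartier _ j _), hsec]
    exact apply_mem_span_image_of_mem_span coeffLinearEquiv.symm.toLinearMap (hg j hj)

end PowerSeries

theorem kProjectiveSeries_subring_general {K : Type*} [Field K] {k : ℕ} :
    (0 : PowerSeries K) ∈ {f : PowerSeries K | ∃ a : ℕ → K, kProjective k K a ∧ f = PowerSeries.mk a} ∧
    (1 : PowerSeries K) ∈ {f : PowerSeries K | ∃ a : ℕ → K, kProjective k K a ∧ f = PowerSeries.mk a} ∧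
    (∀ f g : PowerSeries K,
      f ∈ {f : PowerSeries K | ∃ a : ℕ → K, kProjective k K a ∧ f = PowerSeries.mk a} →
      g ∈ {f : PowerSeries K | ∃ a : ℕ → K, kProjective k K a ∧ f = PowerSeries.mk a} →
      f + g ∈ {f : PowerSeries K | ∃ a : ℕ → K, kProjective k K a ∧ f = PowerSeries.mk a}) ∧
    (∀ f g : PowerSeries K,
      f ∈ {f : PowerSeries K | ∃ a : ℕ → K, kProjective k K a ∧ f = PowerSeries.mk a} →
      g ∈ {f : PowerSeries K | ∃ a : ℕ → K, kProjective k K a ∧ f = PowerSeries.mk a} →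
      f * g ∈ {f : PowerSeries K | ∃ a : ℕ → K, kProjective k K a ∧ f = PowerSeries.mk a}) := by
  have hS : {f : PowerSeries K | ∃ a : ℕ → K, kProjective k K a ∧ f = PowerSeries.mk a} =
      kProjectiveSubring K k := by
    ext f
    refine ⟨fun ⟨a, ha, hf⟩ => hf ▸ isKProjective_mk_iff.2 ha, fun hf => ?_⟩
    have hmk : mk (fun n => coeff n f) = f := ext fun n => coeff_mk n _
    exact ⟨_, isKProjective_mk_iff.1 (hmk.symm ▸ hf), hmk.symm⟩
  rw [hS]
  exact ⟨zero_mem _, one_mem _, fun _ _ => add_mem, fun _ _ => mul_mem⟩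

/-- The set of -projective series, i.e. generating functions of -projective
sequences, is a subring of the power series ring: it contains 0 and 1 and is closed under
addition and multiplication. -/
theorem kProjectiveSeries_subring {K : Type*} [Field K] {k : ℕ} (hk : 2 ≤ k) :
    (0 : PowerSeries K) ∈ {f : PowerSeries K | ∃ a : ℕ → K, kProjective k K a ∧ f = PowerSeries.mk a} ∧
    (1 : PowerSeries K) ∈ {f : PowerSeries K | ∃ a : ℕ → K, kProjective k K a ∧ f = PowerSeries.mk a} ∧
    (∀ f g : PowerSeries K,
      f ∈ {f : PowerSeries K | ∃ a : ℕ → K, kProjective k K a ∧ f = PowerSeries.mk a} →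
      g ∈ {f : PowerSeries K | ∃ a : ℕ → K, kProjective k K a ∧ f = PowerSeries.mk a} →
      f + g ∈ {f : PowerSeries K | ∃ a : ℕ → K, kProjective k K a ∧ f = PowerSeries.mk a}) ∧
    (∀ f g : PowerSeries K,
      f ∈ {f : PowerSeries K | ∃ a : ℕ → K, kProjective k K a ∧ f = PowerSeries.mk a} →
      g ∈ {f : PowerSeries K | ∃ a : ℕ → K, kProjective k K a ∧ f = PowerSeries.mk a} →
      f * g ∈ {f : PowerSeries K | ∃ a : ℕ → K, kProjective k K a ∧ f = PowerSeries.mk a}) :=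
  kProjectiveSeries_subring_general
end

section
/- A sequence (a(n)) with values in a field K is k-projective if and only if there exist an integer d and a family of sequences a_{y,l}(n) (for y ≥ 0, 1 ≤ l ≤ d) with a_{0,1} = a, together with d×d matrices C_{j,y} over K (for 0 ≤ j ≤ k−1, y ≥ 0), such that for all j, y and all l, the Cartier operator Δ_j applied to the vector of sequences (a_{y,1}, …, a_{y,d}) equals C_{j,y} times the vector (a_{y+1,1}, …, a_{y+1,d}), where Δ_j(b)(n) := b(kn+j). -/
/-!
Let `V e` be the span of `S_e(a)`. Since `Δ_r (n ↦ a (kᵉ n + s)) = (n ↦ a (kᵉ⁺¹ n + (kᵉ r + s)))`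
and every `j < kᵉ⁺¹` is `kᵉ r + s` with `r < k` and `s < kᵉ`, the level-`(e+1)` subsequences are
exactly the Cartier images of the level-`e` ones; in particular `Δ_r (V e) ≤ V (e + 1)`.
The matrix identities say precisely that each `Δ_j` maps the family `A y` into the span of
`A (y + 1)`. If `a` is `k`-projective, every `V e` has dimension at most `d`, so spanning families
of the `V e` of a common length (with `a` prepended at level `0`) satisfy them. Conversely,
induction on `e` gives `V e ≤ span (A e)`, which has `d` generators.
-/

open Submodule Set

theorem Submodule.exists_fin_span_eq_of_finrank_le {K M : Type*} [DivisionRing K] [AddCommGroup M]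
    [Module K M] {V : Submodule K M} [FiniteDimensional K V] {d : ℕ}
    (hV : Module.finrank K V ≤ d) : ∃ g : Fin d → M, span K (range g) = V := by
  let b := Module.finBasis K V
  have hb : V ≤ span K (range (V.subtype ∘ b)) := by
    rw [range_comp, span_image, b.span_eq, map_subtype_top]
  refine ⟨fun i => if h : (i : ℕ) < Module.finrank K V then (b ⟨i, h⟩ : M) else 0,
    le_antisymm ((span_le).2 ?_) (hb.trans (span_mono ?_))⟩
  · rintro _ ⟨i, rfl⟩
    dsimp only
    split_ifs
    exacts [coe_mem _, zero_mem V]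
  · rintro _ ⟨i, rfl⟩
    exact ⟨⟨i, i.2.trans_le hV⟩, dif_pos i.2⟩

theorem Submodule.exists_fin_span_eq_of_le_span {K M : Type*} [DivisionRing K] [AddCommGroup M]
    [Module K M] {V : Submodule K M} {d : ℕ} {g : Fin d → M} (hV : V ≤ span K (range g)) :
    ∃ g' : Fin d → M, span K (range g') = V := by
  have : FiniteDimensional K (span K (range g)) := .span_of_finite K (finite_range g)
  have : FiniteDimensional K V := Submodule.finiteDimensional_of_le hV
  refine exists_fin_span_eq_of_finrank_le ((finrank_mono hV).trans ?_)
  simpa [Set.finrank] using finrank_range_le_card (R := K) g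

namespace KProjective

variable {K : Type*} [Field K] (k : ℕ)

noncomputable def cartier (j : ℕ) : (ℕ → K) →ₗ[K] (ℕ → K) :=
  LinearMap.funLeft K K (k * · + j)

@[simp]
theorem cartier_apply (j : ℕ) (b : ℕ → K) (n : ℕ) : cartier k j b n = b (k * n + j) := rfl

theorem cartier_subseq (a : ℕ → K) (e r s : ℕ) :
    cartier k r (fun n => a (k ^ e * n + s)) = fun n => a (k ^ (e + 1) * n + (k ^ e * r + s)) := by
  funext n
  rw [cartier_apply]
  ring_nf

/-- The `K`-span of `S_e(a)`. -/
def kernelSpan (a : ℕ → K) (e : ℕ) : Submodule K (ℕ → K) :=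
  span K ((fun j n => a (k ^ e * n + j)) '' Iio (k ^ e))

variable {k}

theorem subseq_mem_kernelSpan (a : ℕ → K) {e j : ℕ} (hj : j < k ^ e) :
    (fun n => a (k ^ e * n + j)) ∈ kernelSpan k a e :=
  subset_span (mem_image_of_mem _ hj)

theorem kernelSpan_le_iff {a : ℕ → K} {e : ℕ} {W : Submodule K (ℕ → K)} :
    kernelSpan k a e ≤ W ↔ ∀ j < k ^ e, (fun n => a (k ^ e * n + j)) ∈ W := by
  rw [kernelSpan, span_le, image_subset_iff]
  rfl

theorem map_cartier_kernelSpan_le (a : ℕ → K) (e : ℕ) {r : ℕ} (hr : r < k) :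
    (kernelSpan k a e).map (cartier k r) ≤ kernelSpan k a (e + 1) := by
  rw [kernelSpan, map_span_le]
  rintro _ ⟨s, hs : s < k ^ e, rfl⟩
  rw [cartier_subseq]
  refine subseq_mem_kernelSpan a ?_
  calc k ^ e * r + s < k ^ e * (r + 1) := by rw [mul_add_one]; omega
    _ ≤ k ^ (e + 1) := by rw [pow_succ]; exact Nat.mul_le_mul_left _ hr

theorem exists_cartier_subseq_eq (a : ℕ → K) {e j : ℕ} (hj : j < k ^ (e + 1)) :
    ∃ r < k, ∃ s < k ^ e,
      cartier k r (fun n => a (k ^ e * n + s)) = fun n => a (k ^ (e + 1) * n + j) := by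
  rw [pow_succ] at hj
  have hpos : 0 < k ^ e := Nat.pos_of_ne_zero fun h => by simp [h] at hj
  refine ⟨j / k ^ e, Nat.div_lt_of_lt_mul hj, j % k ^ e, Nat.mod_lt _ hpos, ?_⟩
  rw [cartier_subseq, Nat.div_add_mod]

theorem exists_matrix_iff_cartier_mem_span {d : ℕ} (A : ℕ → Fin d → ℕ → K) :
    (∃ C : ℕ → ℕ → Matrix (Fin d) (Fin d) K, ∀ j < k, ∀ y : ℕ, ∀ l : Fin d, ∀ n : ℕ,
        A y l (k * n + j) = ∑ m : Fin d, C j y l m * A (y + 1) m n) ↔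
      ∀ j < k, ∀ y l, cartier k j (A y l) ∈ span K (range (A (y + 1))) := by
  simp only [mem_span_range_iff_exists_fun, funext_iff, Finset.sum_apply, Pi.smul_apply,
    smul_eq_mul, cartier_apply]
  constructor
  · rintro ⟨C, hC⟩ j hj y l
    exact ⟨C j y l, fun n => (hC j hj y l n).symm⟩
  · intro h
    have : ∀ j y l, ∃ c : Fin d → K, j < k →
        ∀ n, ∑ m, c m * A (y + 1) m n = A y l (k * n + j) := by
      intro j y l
      by_cases hj : j < k
      · obtain ⟨c, hc⟩ := h j hj y l
        exact ⟨c, fun _ => hc⟩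
      · exact ⟨0, fun h => absurd h hj⟩
    choose c hc using this
    exact ⟨fun j y => Matrix.of (c j y), fun j hj y l n => (hc j y l hj n).symm⟩

theorem kernelSpan_le_span_of_cartier_mem {d : ℕ} {a : ℕ → K} {A : ℕ → Fin d → ℕ → K}
    (h₀ : a ∈ span K (range (A 0)))
    (hA : ∀ j < k, ∀ y l, cartier k j (A y l) ∈ span K (range (A (y + 1)))) (e : ℕ) :
    kernelSpan k a e ≤ span K (range (A e)) := by
  induction e with
  | zero => simpa [kernelSpan_le_iff] using h₀
  | succ e ih =>
    refine kernelSpan_le_iff.2 fun j hj => ?_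
    obtain ⟨r, hr, s, hs, hrs⟩ := exists_cartier_subseq_eq a hj
    rw [← hrs]
    refine (map_span_le _ _ _).2 ?_ (mem_map_of_mem (ih (subseq_mem_kernelSpan a hs)))
    rintro _ ⟨l, rfl⟩
    exact hA r hr e l

theorem exists_cartier_closed_family {a : ℕ → K} (h : kProjective k K a) :
    ∃ d, ∃ A : ℕ → Fin (d + 1) → ℕ → K, A 0 0 = a ∧
      ∀ j < k, ∀ y l, cartier k j (A y l) ∈ span K (range (A (y + 1))) := by
  obtain ⟨d, hd⟩ := h
  have : ∀ e, ∃ g : Fin d → ℕ → K, span K (range g) = kernelSpan k a e := fun e =>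
    let ⟨_, hg⟩ := hd e
    exists_fin_span_eq_of_le_span (kernelSpan_le_iff.2 hg)
  choose g hg using this
  -- `a` is put in front at level `0` only, since `k ^ y` may vanish for `y > 0`.
  let A y : Fin (d + 1) → ℕ → K := Fin.cons (if y = 0 then a else 0) (g y)
  have hmem : ∀ y l, A y l ∈ kernelSpan k a y := by
    intro y l
    induction l using Fin.cases with
    | zero =>
      obtain rfl | hy := eq_or_ne y 0
      · simpa [A] using subseq_mem_kernelSpan (k := k) a (e := 0) (j := 0) (by simp)
      · simp [A, hy]
    | succ i => simpa [A, ← hg y] using subset_span (mem_range_self i)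
  have hspan : ∀ y, kernelSpan k a y ≤ span K (range (A y)) := fun y =>
    hg y ▸ span_mono (by simp [A, Fin.range_cons])
  refine ⟨d, A, by simp [A], fun j hj y l => hspan (y + 1) ?_⟩
  exact map_cartier_kernelSpan_le a y hj (mem_map_of_mem (hmem y l))

end KProjective

open KProjective in
theorem kProjective_iff_cartier_general {K : Type*} [Field K] {k : ℕ} (a : ℕ → K) :
    kProjective k K a ↔
      ∃ d : ℕ, ∃ hd : 0 < d, ∃ A : ℕ → Fin d → (ℕ → K),
        ∃ C : ℕ → ℕ → Matrix (Fin d) (Fin d) K,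
          A 0 ⟨0, hd⟩ = a ∧
          ∀ j < k, ∀ y : ℕ, ∀ l : Fin d, ∀ n : ℕ,
            A y l (k * n + j) = ∑ m : Fin d, C j y l m * A (y + 1) m n := by
  constructor
  · intro h
    obtain ⟨d, A, hA₀, hA⟩ := exists_cartier_closed_family h
    obtain ⟨C, hC⟩ := (exists_matrix_iff_cartier_mem_span A).2 hA
    exact ⟨d + 1, d.succ_pos, A, C, hA₀, hC⟩
  · rintro ⟨d, hd, A, C, hA₀, hC⟩
    have hA := (exists_matrix_iff_cartier_mem_span A).1 ⟨C, hC⟩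
    have h₀ : a ∈ span K (range (A 0)) := hA₀ ▸ subset_span (mem_range_self _)
    exact ⟨d, fun e => ⟨A e, kernelSpan_le_iff.1 (kernelSpan_le_span_of_cartier_mem h₀ hA e)⟩⟩

/-- Cartier-operator characterization of k-projective sequences: a is k-projective iff
there are a positive integer d, sequences A y l (with A 0 1 = a) and matrices C j y over K
such that applying the Cartier operator (b n) to (b (k*n+j)) to the level-y vector of
sequences gives C j y times the level-(y+1) vector. -/
theorem kProjective_iff_cartier {K : Type*} [Field K] {k : ℕ} (hk : 2 ≤ k) (a : ℕ → K) :
    kProjective k K a ↔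
      ∃ d : ℕ, ∃ hd : 0 < d, ∃ A : ℕ → Fin d → (ℕ → K),
        ∃ C : ℕ → ℕ → Matrix (Fin d) (Fin d) K,
          A 0 ⟨0, hd⟩ = a ∧
          ∀ j < k, ∀ y : ℕ, ∀ l : Fin d, ∀ n : ℕ,
            A y l (k * n + j) = ∑ m : Fin d, C j y l m * A (y + 1) m n :=
  kProjective_iff_cartier_general a
end

section
/- For each word p = p_d…p_1 over {0,…,k−1} and each y ≥ 0, let d(n; p, y) ∈ {0,1} indicate whether the digit block p appears at position y in the base-k representation of n (i.e., the digits of n at positions y, y+1, …, y+d−1 are p_d, p_{d−1}, …, p_1). Then for e ≥ D, the counting function satisfies the splitting identity d(k^e·m + j; p, y) = d(k^e·m; p, y) + d(j; p, y) for all m ≥ 0, 0 ≤ j ≤ k^e − 1, and y ≤ e − d (respectively y ≥ e), provided the block lies entirely in the low digits or entirely in the high digits; consequently, the sequence a(n) = Σ_{d ≤ D} Σ_{p} Σ_{y≥0} μ_p(y)·d(n; p, y), with μ_p : ℕ → K finitely supported in y for each n, is a k-projective sequence. -/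
/-!
Split `n = k ^ e * m + j` with `j < k ^ e`. An occurrence of a block at a position `y ≥ e` lies in
the digits of `m`, so the weighted count over those positions is the count for `m` with the
weights shifted by `e`: one sequence per word, independent of `j`. An occurrence at a position
`y < e` only involves the digits of `j` and the lowest `D` digits of `m`, so the rest of the sum
depends on `m` only through `m % k ^ D`, and lies in a space of dimension `k ^ D`.
-/

open Finset

theorem Nat.div_pow_mod_add_pow_mul {k s t : ℕ} (hk : 0 < k) (hts : t < s) (n q : ℕ) :
    (n + k ^ s * q) / k ^ t % k = n / k ^ t % k := by
  obtain ⟨u, rfl⟩ : ∃ u, s = t + (u + 1) := ⟨s - t - 1, by omega⟩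
  rw [pow_add, mul_assoc, Nat.add_mul_div_left _ _ (pow_pos hk t), pow_succ', mul_assoc,
    Nat.add_mul_mod_self_left]

theorem Nat.pow_mul_add_div_pow_add {k e j : ℕ} (hk : 0 < k) (hj : j < k ^ e) (m t : ℕ) :
    (k ^ e * m + j) / k ^ (e + t) = m / k ^ t := by
  rw [pow_add, ← Nat.div_div_eq_div_mul, Nat.mul_add_div (pow_pos hk e), Nat.div_eq_of_lt hj,
    add_zero]

section BlockCount

variable (K : Type*) [Field K] (k : ℕ) {d : ℕ}

def blockIndicator (w : Fin d → Fin k) (y n : ℕ) : K :=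
  if ∀ i : Fin d, n / k ^ (y + (i : ℕ)) % k = (w i : ℕ) then 1 else 0

/-- Positions `y > n` are cut off; this loses nothing when `ν` vanishes on all-zero words
(`sum_range_eq_blockCount`). -/
def blockCount (w : Fin d → Fin k) (ν : ℕ → K) (n : ℕ) : K :=
  ∑ y ∈ range (n + 1), ν y * blockIndicator K k w y n

variable {K k}

theorem blockIndicator_shift {e j : ℕ} (hk : 0 < k) (hj : j < k ^ e) (w : Fin d → Fin k)
    (y m : ℕ) : blockIndicator K k w (e + y) (k ^ e * m + j) = blockIndicator K k w y m := by
  simp only [blockIndicator, add_assoc, Nat.pow_mul_add_div_pow_add hk hj]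

theorem blockIndicator_mod {e s y : ℕ} (hk : 0 < k) (w : Fin d → Fin k) (hy : y + d ≤ e + s)
    (m j : ℕ) :
    blockIndicator K k w y (k ^ e * m + j) = blockIndicator K k w y (k ^ e * (m % k ^ s) + j) := by
  have hsplit : k ^ e * m + j = k ^ e * (m % k ^ s) + j + k ^ (e + s) * (m / k ^ s) := by
    conv_lhs => rw [← Nat.mod_add_div m (k ^ s)]
    ring
  simp only [blockIndicator, hsplit]
  refine if_congr (forall_congr' fun i => ?_) rfl rfl
  rw [Nat.div_pow_mod_add_pow_mul hk (by omega)]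

theorem blockIndicator_eq_zero_of_lt_pow {y n : ℕ} (hk : 0 < k) (hn : n < k ^ y)
    (w : Fin d → Fin k) (hw : ¬ ∀ i, (w i : ℕ) = 0) : blockIndicator K k w y n = 0 := by
  refine if_neg fun h => hw fun i => ?_
  have hlt : n < k ^ (y + i) := hn.trans_le (Nat.pow_le_pow_right hk (by omega))
  rw [← h i, Nat.div_eq_of_lt hlt, Nat.zero_mod]

theorem sum_range_eq_blockCount (hk : 2 ≤ k) (w : Fin d → Fin k) {ν : ℕ → K}
    (hν : (∀ i, (w i : ℕ) = 0) → ν = 0) {n N : ℕ} (hN : n + 1 ≤ N) :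
    ∑ y ∈ range N, ν y * blockIndicator K k w y n = blockCount K k w ν n := by
  refine (sum_subset (range_subset_range.mpr hN) fun y hyN hyn => ?_).symm
  have hny : n < k ^ y := (show n < y by simp at hyN hyn; omega).trans (Nat.lt_pow_self hk)
  by_cases hw : ∀ i, (w i : ℕ) = 0
  · simp [hν hw]
  · rw [blockIndicator_eq_zero_of_lt_pow (by omega) hny w hw, mul_zero]

theorem blockCount_pow_mul_add (hk : 2 ≤ k) (w : Fin d → Fin k) {ν : ℕ → K}
    (hν : (∀ i, (w i : ℕ) = 0) → ν = 0) {e j : ℕ} (hj : j < k ^ e) (m : ℕ) :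
    blockCount K k w ν (k ^ e * m + j) =
      ∑ y ∈ range e, ν y * blockIndicator K k w y (k ^ e * m + j) +
        blockCount K k w (fun y => ν (e + y)) m := by
  set n := k ^ e * m + j
  have hmn : m ≤ n := (Nat.le_mul_of_pos_left m (by positivity)).trans (Nat.le_add_right _ _)
  have hν' : (∀ i, (w i : ℕ) = 0) → (fun y => ν (e + y)) = 0 := fun h => by rw [hν h]; rfl
  rw [← sum_range_eq_blockCount hk w hν (N := e + (n + 1)) (by omega), sum_range_add,
    ← sum_range_eq_blockCount hk w hν' (N := n + 1) (by omega)]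
  simp only [n, blockIndicator_shift (by omega) hj]

end BlockCount

def residueIndicator (K : Type*) [Field K] (N r : ℕ) : ℕ → K :=
  fun m => if m % N = r then 1 else 0

theorem mem_span_residueIndicator {K : Type*} [Field K] {N : ℕ} (hN : 0 < N) {f : ℕ → K}
    (hf : ∀ m, f m = f (m % N)) :
    f ∈ Submodule.span K (Set.range fun r : Fin N => residueIndicator K N r) := by
  have hsum : f = ∑ r ∈ range N, f r • residueIndicator K N r := by
    funext m
    simp [residueIndicator, Finset.sum_apply, Nat.mod_lt m hN, ← hf m]
  rw [hsum]
  exact Submodule.sum_mem _ fun r hr =>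
    Submodule.smul_mem _ _ (Submodule.subset_span ⟨⟨r, mem_range.mp hr⟩, rfl⟩)

theorem kProjective_of_forall_mem_span {K : Type*} [Field K] {k : ℕ} {a : ℕ → K}
    {ι : Type*} [Fintype ι] (g : ℕ → ι → ℕ → K)
    (h : ∀ e, ∀ j < k ^ e,
      (fun n => a (k ^ e * n + j)) ∈ Submodule.span K (Set.range (g e))) :
    kProjective k K a :=
  ⟨Fintype.card ι, fun e => ⟨g e ∘ (Fintype.equivFin ι).symm, fun j hj => by
    rw [(Fintype.equivFin ι).symm.surjective.range_comp]
    exact h e j hj⟩⟩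

theorem digitBlockCount_kProjective_general {K : Type*} [Field K] {k D : ℕ} (hk : 2 ≤ k)
    (μ : (Σ d : Fin (D + 1), Fin (d : ℕ) → Fin k) → ℕ → K)
    (hμ : ∀ p : Σ d : Fin (D + 1), Fin (d : ℕ) → Fin k,
      (∀ i : Fin (p.1 : ℕ), (p.2 i : ℕ) = 0) → μ p = 0)
    (a : ℕ → K)
    (haDef : ∀ n : ℕ, a n = ∑ p : Σ d : Fin (D + 1), Fin (d : ℕ) → Fin k,
      ∑ y ∈ Finset.range (n + 1), μ p y *
        (if ∀ i : Fin (p.1 : ℕ), n / k ^ (y + (i : ℕ)) % k = (p.2 i : ℕ) then 1 else 0)) :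
    kProjective k K a := by
  have ha : ∀ n, a n = ∑ p, blockCount K k p.2 (μ p) n := haDef
  refine kProjective_of_forall_mem_span
    (fun e => Sum.elim (fun r : Fin (k ^ D) => residueIndicator K (k ^ D) r)
      fun p => blockCount K k p.2 fun y => μ p (e + y)) fun e j hj => ?_
  set low : ℕ → K := fun m =>
    ∑ p, ∑ y ∈ range e, μ p y * blockIndicator K k p.2 y (k ^ e * m + j)
  have hsplit :
      (fun m => a (k ^ e * m + j)) = low + ∑ p, blockCount K k p.2 fun y => μ p (e + y) := by
    funext m
    simp only [ha, blockCount_pow_mul_add hk _ (hμ _) hj, sum_add_distrib, Pi.add_apply,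
      Finset.sum_apply, low]
  have hlow : ∀ m, low m = low (m % k ^ D) := fun m => by
    refine sum_congr rfl fun p _ => sum_congr rfl fun y hy => ?_
    have hyD : y + p.1 ≤ e + D := by have := p.1.2; simp at hy; omega
    rw [blockIndicator_mod (by omega) p.2 hyD]
  rw [hsplit, Set.Sum.elim_range, Submodule.span_union]
  refine Submodule.add_mem _ (Submodule.mem_sup_left ?_) (Submodule.mem_sup_right ?_)
  · exact mem_span_residueIndicator (by positivity) hlow
  · exact Submodule.sum_mem _ fun p _ => Submodule.subset_span ⟨p, rfl⟩

/-- A sequence built from weighted counts of occurrences of digit blocks (words of length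
at most `D` over the base-`k` digits) in the base-`k` representation is `k`-projective.
Words are encoded as pairs `⟨d, p⟩` with `d ≤ D` and `p : Fin d → Fin k`; the weight of
the all-zero word (in particular the empty word) is required to vanish, so that for every
`n` only finitely many terms (those with `y ≤ n`) are nonzero and the inner sum over
`y ∈ Finset.range (n + 1)` agrees with the full infinite sum. -/
theorem digitBlockCount_kProjective {K : Type*} [Field K] {k D : ℕ} (hk : 2 ≤ k)
    (hD : 1 ≤ D) (μ : (Σ d : Fin (D + 1), Fin (d : ℕ) → Fin k) → ℕ → K)
    (hμ : ∀ p : Σ d : Fin (D + 1), Fin (d : ℕ) → Fin k,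
      (∀ i : Fin (p.1 : ℕ), (p.2 i : ℕ) = 0) → μ p = 0)
    (a : ℕ → K)
    (haDef : ∀ n : ℕ, a n = ∑ p : Σ d : Fin (D + 1), Fin (d : ℕ) → Fin k,
      ∑ y ∈ Finset.range (n + 1), μ p y *
        (if ∀ i : Fin (p.1 : ℕ), n / k ^ (y + (i : ℕ)) % k = (p.2 i : ℕ) then 1 else 0)) :
    kProjective k K a :=
  digitBlockCount_kProjective_general hk μ hμ a haDef
end

section
/- If (a(n)) is a d-type k-projective sequence over a field K and f_{e,j}(z) := Σ_{n≥0} a(k^e n + j) z^n, then for every e ≥ 0 and every tuple (j_0, j_1, …, j_d) with 0 ≤ j_i ≤ k^{e+i} − 1, the d+1 power series f_{e,j_0}(z), f_{e+1,j_1}(z^k), …, f_{e+d,j_d}(z^{k^d}) are linearly dependent over the field of rational functions K(z). -/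
/-!
Splitting `n` by its residue `s` modulo `k ^ (d - i)` writes `f_{e+i,j}(z^{k^i})` as a
combination, with coefficients `z^{k^i s}`, of series `f_{e+d,J}(z^{k^d})` with `J < k^{e+d}`.
By projectivity at level `e + d`, every such series lies in the `K(z)`-span of the `d` series
`g_t(z^{k^d})`, so the `d + 1` given series are dependent.
-/

open PowerSeries Submodule
open scoped LaurentSeries RatFunc

namespace PowerSeries

variable {R : Type*} [CommRing R]

theorem mk_ite_dvd_eq_expand (p : ℕ) (hp : p ≠ 0) (b : ℕ → R) :
    mk (fun n => if p ∣ n then b (n / p) else 0) = expand p hp (mk b) := by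
  ext n
  simp [coeff_expand]

theorem mk_eq_sum_X_pow_mul_expand (r : ℕ) (hr : r ≠ 0) (b : ℕ → R) :
    mk b = ∑ s ∈ Finset.range r, X ^ s * expand r hr (mk fun n => b (r * n + s)) := by
  ext n
  simp only [coeff_mk, map_sum, coeff_X_pow_mul', coeff_expand]
  rw [Finset.sum_eq_single (n % r)]
  · have hdvd : r ∣ n - n % r := Nat.dvd_sub_mod n
    rw [if_pos (Nat.mod_le n r), if_pos hdvd, Nat.mul_div_cancel' hdvd,
      Nat.sub_add_cancel (Nat.mod_le n r)]
  · intro s hs hsn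
    refine ite_eq_right_iff.mpr fun hsle => ite_eq_right_iff.mpr fun hdvd => absurd ?_ hsn
    rw [← Nat.mod_eq_of_lt (Finset.mem_range.mp hs)]
    exact (Nat.modEq_iff_dvd' hsle).mpr hdvd
  · exact fun h => absurd (Finset.mem_range.mpr (Nat.mod_lt n (Nat.pos_of_ne_zero hr))) h

end PowerSeries

section LaurentSeries

variable {K : Type*} [Field K]

theorem RatFunc.C_smul_laurentSeries (c : K) (y : K⸨X⸩) : (RatFunc.C c : K⟮X⟯) • y = c • y := by
  rw [Algebra.smul_def, ← RatFunc.algebraMap_C, ← IsScalarTower.algebraMap_apply]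
  simp

instance : IsScalarTower K K⟮X⟯ K⸨X⸩ where
  smul_assoc c r y := by
    rw [RatFunc.smul_eq_C_mul, mul_smul, RatFunc.C_smul_laurentSeries]

theorem HahnSeries.ofPowerSeries_X_pow_mul_eq_smul (n : ℕ) (y : K⸨X⸩) :
    HahnSeries.ofPowerSeries ℤ K (X ^ n) * y = (RatFunc.X ^ n : K⟮X⟯) • y := by
  rw [Algebra.smul_def, map_pow, map_pow, RatFunc.coe_X, HahnSeries.ofPowerSeries_X]

variable (K) in
/-- `b ↦ ∑ₙ b n X^(m n)`: with `b` a section of `a`, this is the paper's `f_{e,j}(z^m)`. -/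
noncomputable def expandedGenSeries (m : ℕ) (hm : m ≠ 0) : (ℕ → K) →ₗ[K] K⸨X⸩ where
  toFun b := HahnSeries.ofPowerSeries ℤ K (expand m hm (mk b))
  map_add' b b' := by
    rw [← map_add, ← map_add]
    rfl
  map_smul' c b := by
    rw [RingHom.id_apply, ← HahnSeries.C_mul_eq_smul, ← HahnSeries.ofPowerSeries_C, ← map_mul,
      ← expand_C m hm, ← map_mul, ← smul_eq_C_mul]
    rfl

theorem expandedGenSeries_apply (m : ℕ) (hm : m ≠ 0) (b : ℕ → K) :
    expandedGenSeries K m hm b = HahnSeries.ofPowerSeries ℤ K (expand m hm (mk b)) := rfl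

theorem expandedGenSeries_eq_sum {p r : ℕ} (hp : p ≠ 0) (hr : r ≠ 0) (b : ℕ → K) :
    expandedGenSeries K p hp b = ∑ s ∈ Finset.range r, (RatFunc.X ^ (p * s) : K⟮X⟯) •
      expandedGenSeries K (p * r) (mul_ne_zero hp hr) (fun n => b (r * n + s)) := by
  simp only [expandedGenSeries_apply, expand_mul p hp r hr,
    ← HahnSeries.ofPowerSeries_X_pow_mul_eq_smul]
  rw [mk_eq_sum_X_pow_mul_expand r hr b]
  simp only [map_sum, map_mul, map_pow, expand_X, pow_mul]

theorem expandedGenSeries_mem_span_of_mem_span {ι : Type*} (m : ℕ) (hm : m ≠ 0) {g : ι → ℕ → K}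
    {b : ℕ → K} (hb : b ∈ span K (Set.range g)) :
    expandedGenSeries K m hm b ∈ span K⟮X⟯ (Set.range fun t => expandedGenSeries K m hm (g t)) := by
  apply span_le_restrictScalars K K⟮X⟯
  rw [← Function.comp_def, Set.range_comp]
  exact apply_mem_span_image_of_mem_span _ hb

theorem expandedGenSeries_section_mem_span {ι : Type*} {p q r m N : ℕ} (hp : p ≠ 0) (hm : m ≠ 0)
    (hpr : p * r = m) (hqr : q * r = N) {a : ℕ → K} {g : ι → ℕ → K}
    (hg : ∀ J < N, (fun n => a (N * n + J)) ∈ span K (Set.range g)) {J : ℕ} (hJ : J < q) :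
    expandedGenSeries K p hp (fun n => a (q * n + J)) ∈
      span K⟮X⟯ (Set.range fun t => expandedGenSeries K m hm (g t)) := by
  subst hpr hqr
  have hr : r ≠ 0 := right_ne_zero_of_mul hm
  rw [expandedGenSeries_eq_sum hp hr]
  refine sum_mem fun s hs => smul_mem _ _ ?_
  have hsJ : q * s + J < q * r := calc
    q * s + J < q * (s + 1) := by rw [mul_add_one]; omega
    _ ≤ q * r := Nat.mul_le_mul_left q (Finset.mem_range.mp hs)
  convert expandedGenSeries_mem_span_of_mem_span _ hm (hg _ hsJ) using 3 with n
  ring_nf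

end LaurentSeries

theorem exists_ne_zero_sum_smul_eq_zero_of_mem_span {R M ι κ : Type*} [Ring R]
    [StrongRankCondition R] [AddCommGroup M] [Module R M] [Fintype ι] [Fintype κ]
    (f : ι → M) (g : κ → M) (hcard : Fintype.card κ < Fintype.card ι)
    (hf : ∀ i, f i ∈ span R (Set.range g)) :
    ∃ c : ι → R, c ≠ 0 ∧ ∑ i, c i • f i = 0 := by
  classical
  have hdep : ¬ LinearIndependent R f := fun hli =>
    (linearIndependent_le_span_aux' f hli _ (Set.range_subset_iff.mpr hf)).not_gt
      (hcard.trans_le' (Fintype.card_range_le g))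
  obtain ⟨c, hc, i, hi⟩ := Fintype.not_linearIndependent_iff.mp hdep
  exact ⟨c, Function.ne_iff.mpr ⟨i, hi⟩, hc⟩

open RatFunc in
/-- If `(a n)` is a `d`-type `k`-projective sequence, then for all `e` and all tuples
`(j 0, ..., j d)` with `j i < k ^ (e + i)`, the `d + 1` power series
`f_{e,j_0}(z), f_{e+1,j_1}(z^k), ..., f_{e+d,j_d}(z^{k^d})` (viewed inside the field of
formal Laurent series) are linearly dependent over the rational function field `K(z)`,
where `f_{e,j}(z) = ∑ a (k^e n + j) zⁿ`. -/
theorem kProjective_sections_linearDependent {K : Type*} [Field K] {k d : ℕ} (hk : 2 ≤ k)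
    (a : ℕ → K)
    (ha : ∀ e : ℕ, ∃ g : Fin d → (ℕ → K),
      ∀ j < k ^ e, (fun n => a (k ^ e * n + j)) ∈ Submodule.span K (Set.range g))
    (e : ℕ) (j : Fin (d + 1) → ℕ) (hj : ∀ i : Fin (d + 1), j i < k ^ (e + (i : ℕ))) :
    ∃ c : Fin (d + 1) → RatFunc K, c ≠ 0 ∧
      ∑ i : Fin (d + 1), c i •
        ((HahnSeries.ofPowerSeries ℤ K
          (PowerSeries.mk fun n =>
            if k ^ (i : ℕ) ∣ n then a (k ^ (e + (i : ℕ)) * (n / k ^ (i : ℕ)) + j i) else 0))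
          : LaurentSeries K) = 0 := by
  have hk0 : k ≠ 0 := by omega
  obtain ⟨g, hg⟩ := ha (e + d)
  refine exists_ne_zero_sum_smul_eq_zero_of_mem_span _
    (fun t => expandedGenSeries K (k ^ d) (pow_ne_zero d hk0) (g t)) (by simp) fun i => ?_
  have hid : (i : ℕ) + (d - i) = d := by omega
  rw [mk_ite_dvd_eq_expand _ (pow_ne_zero _ hk0) fun n => a (k ^ (e + i) * n + j i)]
  exact expandedGenSeries_section_mem_span (r := k ^ (d - i)) _ _
    (by rw [← pow_add, hid]) (by rw [← pow_add, add_assoc, hid]) hg (hj i)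
end

section
/- Let A_0 = 1, B_0 = 1 be words over {1, −1}, and define recursively A_{n+1} = A_n B_n and B_{n+1} = B_n f_n(A_n), where f_n ∈ {1, −1} and f(W) multiplies each letter of W by f. Let (a(n))_{n≥0} be the limit word lim A_n. Then for all n ≥ 0 and 0 ≤ j ≤ 2^n − 1: a(j + 2^n + 2^{n+1}) = f_n · a(j) and a(j + 2^n) = a(j + 2^{n+1}). -/
/-- The pair of words `(A n, B n)` over `{1, -1} ⊆ ℤ` defined by `A 0 = B 0 = [1]`,
`A (n+1) = A n ++ B n`, `B (n+1) = B n ++ f n • (A n)`. -/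
def recWord (f : ℕ → ℤ) : ℕ → List ℤ × List ℤ
  | 0 => ([1], [1])
  | n + 1 => ((recWord f n).1 ++ (recWord f n).2,
      (recWord f n).2 ++ (recWord f n).1.map (fun x => f n * x))

/-- The limit word `a = lim A n`: since `A (n+1)` begins with `A n` and `A m` has length
`2 ^ m > n` for `m = n + 1`, the `n`-th letter is well-defined. -/
def recWordLimit (f : ℕ → ℤ) (n : ℕ) : ℤ := ((recWord f (n + 1)).1).getD n 1

/-!
Since `A (n+1) = A n ++ B n`, the letters of `a` at positions `2^n + k` with
`k < 2^n` spell out `B n`. Since `B (n+1) = B n ++ f n • A n`, reading the first half of `B (n+1)`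
at offset `2^(n+1)` gives back `B n` at offset `2^n`, and reading its second half gives `f n • A n`.
-/

theorem length_recWord (f : ℕ → ℤ) (n : ℕ) :
    (recWord f n).1.length = 2 ^ n ∧ (recWord f n).2.length = 2 ^ n := by
  induction n with
  | zero => simp [recWord]
  | succ n ih => simp [recWord, ih.1, ih.2, pow_succ, mul_two]

theorem recWord_fst_prefix_of_le (f : ℕ → ℤ) {m m' : ℕ} (h : m ≤ m') :
    (recWord f m).1 <+: (recWord f m').1 := by
  induction m', h using Nat.le_induction with
  | base => exact List.prefix_refl _
  | succ m' _ ih => exact ih.trans (List.prefix_append _ _)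

theorem recWordLimit_eq_getD (f : ℕ → ℤ) {m k : ℕ} (hk : k < 2 ^ m) :
    recWordLimit f k = (recWord f m).1.getD k 1 := by
  have getD_eq_of_le : ∀ {a b : ℕ}, a ≤ b → k < 2 ^ a →
      (recWord f a).1.getD k 1 = (recWord f b).1.getD k 1 := by
    intro a b hab hka
    obtain ⟨t, ht⟩ := recWord_fst_prefix_of_le f hab
    rw [← ht, List.getD_append _ _ _ _ (by rwa [(length_recWord f a).1])]
  rcases le_total m (k + 1) with h | h
  · exact (getD_eq_of_le h hk).symm
  · exact getD_eq_of_le h (Nat.lt_two_pow_self.trans (Nat.pow_lt_pow_succ one_lt_two))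

theorem recWordLimit_two_pow_add (f : ℕ → ℤ) {n k : ℕ} (hk : k < 2 ^ n) :
    recWordLimit f (2 ^ n + k) = (recWord f n).2.getD k 1 := by
  rw [recWordLimit_eq_getD f (m := n + 1) (by omega), recWord,
    List.getD_append_right _ _ _ _ (by simp [(length_recWord f n).1]), (length_recWord f n).1,
    Nat.add_sub_cancel_left]

theorem recWordLimit_recurrence_general (f : ℕ → ℤ) (n : ℕ)
    (j : ℕ) (hj : j < 2 ^ n) :
    recWordLimit f (j + 2 ^ n + 2 ^ (n + 1)) = f n * recWordLimit f j ∧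
    recWordLimit f (j + 2 ^ n) = recWordLimit f (j + 2 ^ (n + 1)) := by
  obtain ⟨hA, hB⟩ := length_recWord f n
  have hj' : j < 2 ^ (n + 1) := hj.trans (Nat.pow_lt_pow_succ one_lt_two)
  constructor
  · rw [add_comm, recWordLimit_two_pow_add f (by omega), recWord,
      List.getD_append_right _ _ _ _ (by omega), hB, Nat.add_sub_cancel,
      List.getD_eq_getElem _ _ (by simpa [hA]), List.getElem_map,
      recWordLimit_eq_getD f hj, List.getD_eq_getElem _ _ (by rwa [hA])]
  · rw [add_comm, recWordLimit_two_pow_add f hj, add_comm, recWordLimit_two_pow_add f hj', recWord,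
      List.getD_append _ _ _ _ (by rwa [hB])]

/-- The limit word of the recursion `A (n+1) = A n B n`, `B (n+1) = B n fₙ(A n)` satisfies
`a (j + 2^n + 2^(n+1)) = f n * a j` and `a (j + 2^n) = a (j + 2^(n+1))` for `j < 2^n`. -/
theorem recWordLimit_recurrence (f : ℕ → ℤ) (hf : ∀ n, f n = 1 ∨ f n = -1) (n : ℕ)
    (j : ℕ) (hj : j < 2 ^ n) :
    recWordLimit f (j + 2 ^ n + 2 ^ (n + 1)) = f n * recWordLimit f j ∧
    recWordLimit f (j + 2 ^ n) = recWordLimit f (j + 2 ^ (n + 1)) :=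
  recWordLimit_recurrence_general f n j hj
end

section
/- Suppose (a(n)) takes values in {0, …, b−1} and there exist, for each e ≥ 0, sequences a_{e,1}, …, a_{e,d} taking at most b distinct values, and matrices expressing the hidden fractal decomposition so that every factor of length m of (a(n)) with k^{y−1} ≤ m < k^y occurs inside a window of length 2k^y determined by the values of two consecutive symbols of a level-y sequence. Then the subword complexity satisfies p(m, (a(n))) ≤ b^{2d}·k·m for all m ≥ 1, i.e., p(m) = O(m). -/
/-- The subword complexity of a sequence: the number of distinct factors of length `m`. -/
noncomputable def subwordComplexity {b : ℕ} (a : ℕ → Fin b) (m : ℕ) : ℕ :=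
  Set.ncard {w : Fin m → Fin b | ∃ j : ℕ, ∀ i : Fin m, w i = a (j + (i : ℕ))}

/-- Hidden fractal complexity bound: suppose `a` takes values in `{0, ..., b-1}` and for
every level `y ≥ 1` there are a level sequence `c : ℕ → Fin (b ^ d)` and windows
`F u v : ℕ → Fin b` (determined by two consecutive level symbols) such that every factor
of `a` of length `k ^ y` starting anywhere occurs in some window at an offset `< k ^ y`.
Then `p(m, a) ≤ b ^ (2 * d) * k * m` for every `m ≥ 1`. -/
theorem hiddenFractal_complexity {k b d : ℕ} (hk : 2 ≤ k) (hb : 2 ≤ b) (hd : 1 ≤ d)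
    (a : ℕ → Fin b)
    (hfractal : ∀ y : ℕ, 1 ≤ y → ∃ c : ℕ → Fin (b ^ d),
      ∃ F : Fin (b ^ d) → Fin (b ^ d) → (ℕ → Fin b),
        ∀ j : ℕ, ∃ n : ℕ, ∃ off : ℕ, off < k ^ y ∧
          ∀ i : ℕ, i < k ^ y → a (j + i) = F (c n) (c (n + 1)) (off + i)) :
    ∀ m : ℕ, 1 ≤ m → subwordComplexity a m ≤ b ^ (2 * d) * k * m := by
  intro m hm
  -- choose a level y with m ≤ k^y ≤ k*m
  obtain ⟨y, hy1, hmy, hyk⟩ : ∃ y : ℕ, 1 ≤ y ∧ m ≤ k ^ y ∧ k ^ y ≤ k * m := by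
    have hk' : 1 < k := hk
    rcases eq_or_lt_of_le hm with h | h
    · refine ⟨1, le_refl 1, ?_, ?_⟩
      · simp [← h]; omega
      · simp [← h]
    · have h2 : 2 ≤ m := h
      refine ⟨Nat.clog k m, Nat.clog_pos hk' h2, Nat.le_pow_clog hk' m, ?_⟩
      have hlt : k ^ (Nat.clog k m - 1) < m := Nat.pow_pred_clog_lt_self hk' h2
      have hy1 : 1 ≤ Nat.clog k m := Nat.clog_pos hk' h2
      calc k ^ Nat.clog k m = k ^ (Nat.clog k m - 1 + 1) := by rw [Nat.sub_add_cancel hy1]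
        _ = k ^ (Nat.clog k m - 1) * k := pow_succ k _
        _ ≤ m * k := Nat.mul_le_mul_right k hlt.le
        _ = k * m := Nat.mul_comm m k
  obtain ⟨c, F, hF⟩ := hfractal y hy1
  have key : ∀ w ∈ {w : Fin m → Fin b | ∃ j : ℕ, ∀ i : Fin m, w i = a (j + (i : ℕ))},
      ∃ t : Fin (b ^ d) × Fin (b ^ d) × Fin (k ^ y),
        ∀ i : Fin m, w i = F t.1 t.2.1 ((t.2.2 : ℕ) + (i : ℕ)) := by
    rintro w ⟨j, hj⟩
    obtain ⟨n, off, hoff, h⟩ := hF j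
    exact ⟨(c n, c (n + 1), ⟨off, hoff⟩), fun i => by
      rw [hj i, h i (lt_of_lt_of_le i.2 hmy)]⟩
  have hne : Nonempty (Fin (b ^ d) × Fin (b ^ d) × Fin (k ^ y)) :=
    ⟨(⟨0, by positivity⟩, ⟨0, by positivity⟩, ⟨0, by positivity⟩)⟩
  choose! f hf using key
  have hinj : Set.InjOn f {w : Fin m → Fin b | ∃ j : ℕ, ∀ i : Fin m, w i = a (j + (i : ℕ))} := by
    intro w1 h1 w2 h2 heq
    funext i
    rw [hf w1 h1 i, hf w2 h2 i, heq]
  have hcard : subwordComplexity a m ≤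
      Nat.card (Fin (b ^ d) × Fin (b ^ d) × Fin (k ^ y)) := by
    rw [subwordComplexity]
    have := Set.ncard_le_ncard_of_injOn f (fun w _ => Set.mem_univ (f w)) hinj
      Set.finite_univ
    simpa [Set.ncard_univ] using this
  have hcard2 : Nat.card (Fin (b ^ d) × Fin (b ^ d) × Fin (k ^ y))
      = b ^ (2 * d) * k ^ y := by
    simp [Nat.card_eq_fintype_card, two_mul, pow_add, mul_assoc]
  calc subwordComplexity a m ≤ b ^ (2 * d) * k ^ y := by rw [← hcard2]; exact hcard
    _ ≤ b ^ (2 * d) * (k * m) := Nat.mul_le_mul_left _ hyk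
    _ = b ^ (2 * d) * k * m := (Nat.mul_assoc _ _ _).symm
end

section
/- If k > 1 and l > 0 are integers and t ≥ 0, then there exists a positive integer x such that the base-k representation of x·l has leading structure x·l = Σ_{q=1}^{Q} s_q k^{w(q)} with s_1 = 1, w(2) − w(1) > t, the exponents w(q) strictly increasing, and all digits s_q in {1, …, k−1}. (In other words, some multiple of l has a base-k expansion whose lowest nonzero digit is 1 and which is followed by a gap of more than t zero digits.) -/
/-!
Choose `w` and `e > t` with `k ^ (w + e) ≡ k ^ w [MOD l]` (pigeonhole on powers of `k` modulo
`l`). Then `N = k ^ w + k ^ (w + e) * (l - 1)` is `≡ k ^ w * l ≡ 0 [MOD l]`, while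
`N ≡ k ^ w [MOD k ^ (w + t + 1)]`, so its base-`k` digits up to position `w + t` are those of
`k ^ w`.
-/

namespace Nat

theorem div_pow_mod_eq_of_modEq {k s m n i : ℕ} (h : m ≡ n [MOD k ^ s]) (hi : i < s) :
    m / k ^ i % k = n / k ^ i % k := by
  rw [← mod_mul_right_div_self, ← mod_mul_right_div_self n, ← pow_succ,
    h.of_dvd (pow_dvd_pow k hi)]

theorem pow_div_pow_mod_self {k : ℕ} (hk : 1 < k) (w i : ℕ) :
    k ^ w / k ^ i % k = if i = w then 1 else 0 := by
  rcases lt_trichotomy i w with hiw | rfl | hwi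
  · rw [if_neg hiw.ne, Nat.pow_div hiw.le (by omega),
      ← succ_pred_eq_of_pos (Nat.sub_pos_of_lt hiw), pow_succ, mul_mod_left]
  · rw [if_pos rfl, Nat.div_self (by positivity), one_mod_eq_one.mpr hk.ne']
  · rw [if_neg hwi.ne', div_eq_of_lt (Nat.pow_lt_pow_right hk hwi), zero_mod]

theorem exists_pow_add_modEq_pow (k : ℕ) {l : ℕ} (hl : 0 < l) (d : ℕ) :
    ∃ u e, d ≤ e ∧ k ^ (u + e) ≡ k ^ u [MOD l] := by
  obtain ⟨a, b, hab, hmod⟩ := Set.Finite.exists_lt_map_eq_of_forall_mem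
    (f := fun n => k ^ (d * n) % l) (fun n => Set.mem_Iio.mpr (mod_lt _ hl)) (Set.finite_Iio l)
  refine ⟨d * a, d * (b - a), Nat.le_mul_of_pos_right d (by omega), ?_⟩
  rw [← mul_add, Nat.add_sub_cancel' hab.le]
  exact hmod.symm

theorem dvd_pow_add_pow_add_mul_pred {k l u e : ℕ} (hl : 0 < l)
    (h : k ^ (u + e) ≡ k ^ u [MOD l]) : l ∣ k ^ u + k ^ (u + e) * (l - 1) := by
  rw [← modEq_zero_iff_dvd]
  calc k ^ u + k ^ (u + e) * (l - 1) ≡ k ^ u + k ^ u * (l - 1) [MOD l] :=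
        (h.mul_right _).add_left _
    _ = k ^ u * l := by rw [← mul_one_add]; congr 1; omega
    _ ≡ 0 [MOD l] := modEq_zero_iff_dvd.mpr (dvd_mul_left l _)

end Nat

/-- For integers `k ≥ 2`, `l ≥ 1` and any `t`, some positive multiple `x * l` of `l` has a
base-`k` expansion whose lowest nonzero digit equals `1`, sitting at some position `w`,
followed by a gap of more than `t` zero digits before the next nonzero digit. -/
theorem exists_multiple_low_digit_one_with_gap {k l : ℕ} (hk : 2 ≤ k) (hl : 1 ≤ l)
    (t : ℕ) :
    ∃ x : ℕ, 0 < x ∧ ∃ w : ℕ,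
      x * l / k ^ w % k = 1 ∧
      (∀ i : ℕ, i < w → x * l / k ^ i % k = 0) ∧
      (∀ i : ℕ, w < i → i ≤ w + t → x * l / k ^ i % k = 0) := by
  obtain ⟨w, e, hte, hper⟩ := Nat.exists_pow_add_modEq_pow k hl (t + 1)
  set N := k ^ w + k ^ (w + e) * (l - 1)
  have hdvd : l ∣ N := Nat.dvd_pow_add_pow_add_mul_pred hl hper
  have hN : N ≡ k ^ w [MOD k ^ (w + t + 1)] := by
    have hgap : k ^ (w + t + 1) ∣ k ^ (w + e) * (l - 1) :=
      (Nat.pow_dvd_pow k (by omega)).mul_right _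
    simpa only [add_zero] using (Nat.modEq_zero_iff_dvd.mpr hgap).add_left (k ^ w)
  have hdigit : ∀ i ≤ w + t, N / k ^ i % k = if i = w then 1 else 0 := fun i hi => by
    rw [Nat.div_pow_mod_eq_of_modEq hN (by omega), Nat.pow_div_pow_mod_self hk]
  refine ⟨N / l, Nat.div_pos (Nat.le_of_dvd (by positivity) hdvd) hl, w, ?_, ?_, ?_⟩ <;>
    rw [Nat.div_mul_cancel hdvd]
  · simpa using hdigit w (by omega)
  · intro i hi; simpa [hi.ne] using hdigit i (by omega)
  · intro i hi hit; simpa [hi.ne'] using hdigit i hit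
end

section
/- Let a(n) ∈ {0, …, L−1} be defined by a(n) ≡ Σ_{d≥2} Σ_{y≥0} μ_d(y)·d(n; k^y + k^{y+1} + … + k^{y+d−1}) (mod L), where d(n; k^y+…+k^{y+d−1}) indicates that the block of d consecutive digits all equal to 1 occurs at position y in the base-k representation of n, and μ_d : ℕ → {0,…,L−1}. Then for all positive integers N, l, n, t and 0 ≤ j ≤ k^n, one has a(N + l·(k^{N+l+1+n}·t + j)) ≡ a(N + l·j) + a(l·k^{N+l+1+n}·t) (mod L). -/
/-!
Write `X = A + k^(P+1) C` with `A < k^P`. Below position `P + 1` the base-`k` digits of `X` are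
those of `A`, from position `P + 1` on they are those of `k^(P+1) C`, and the digit at position `P`
is `0`. Hence a block of ones in `X` lies entirely in one of the two parts, and the block counts of
`X` are the sums of those of `A` and of `k^(P+1) C`. For `X = N + l (k^(N+l+1+n) t + j)` take
`A = N + l j < (N + l) k^n < k^(N+l+n)` and `C = l t`.
-/

/-- Indicator (valued in `ZMod L`) that the base-`k` digits of `m` at positions
`y, y+1, ..., y+d-1` are all equal to `1`. -/
def onesBlock (k L : ℕ) (d y m : ℕ) : ZMod L :=
  if ∀ i < d, m / k ^ (y + i) % k = 1 then 1 else 0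

open Finset

def onesBlockSum (k L : ℕ) (μ : ℕ → ℕ → ZMod L) (M m : ℕ) : ZMod L :=
  ∑ d ∈ Icc 2 (M + 2), ∑ y ∈ range (M + 1), μ d y * onesBlock k L d y m

section Digits

variable {k : ℕ}

lemma div_pow_mod_eq_zero_of_lt {m z : ℕ} (h : m < k ^ z) : m / k ^ z % k = 0 := by
  rw [Nat.div_eq_of_lt h, Nat.zero_mod]

lemma add_pow_mul_div_pow_mod_of_lt (hk : 0 < k) (A C : ℕ) {s z : ℕ} (hz : z < s) :
    (A + k ^ s * C) / k ^ z % k = A / k ^ z % k := by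
  obtain ⟨r, rfl⟩ : ∃ r, s = z + r + 1 := ⟨s - z - 1, by omega⟩
  have hs : k ^ (z + r + 1) * C = k ^ z * (k * (k ^ r * C)) := by ring
  rw [hs, Nat.add_mul_div_left _ _ (pow_pos hk z), Nat.add_mul_mod_self_left]

lemma pow_mul_div_pow_mod_of_lt (hk : 0 < k) (C : ℕ) {s z : ℕ} (hz : z < s) :
    k ^ s * C / k ^ z % k = 0 := by
  simpa using add_pow_mul_div_pow_mod_of_lt hk 0 C hz

lemma add_pow_mul_div_pow_of_le (hk : 0 < k) {A : ℕ} (C : ℕ) {s z : ℕ} (hA : A < k ^ s)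
    (hz : s ≤ z) : (A + k ^ s * C) / k ^ z = k ^ s * C / k ^ z := by
  have hs : k ^ z = k ^ s * k ^ (z - s) := by rw [← pow_add, Nat.add_sub_cancel' hz]
  rw [hs, ← Nat.div_div_eq_div_mul, ← Nat.div_div_eq_div_mul,
    Nat.add_mul_div_left _ _ (pow_pos hk s), Nat.div_eq_of_lt hA, zero_add,
    Nat.mul_div_cancel_left _ (pow_pos hk s)]

end Digits

section OnesBlock

variable {k L : ℕ}

lemma onesBlock_eq_zero_of_digit_eq_zero {d y m i : ℕ} (hi : i < d)
    (h : m / k ^ (y + i) % k = 0) : onesBlock k L d y m = 0 :=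
  if_neg fun hall => zero_ne_one (h.symm.trans (hall i hi))

lemma onesBlock_congr {d y m m' : ℕ}
    (h : ∀ i < d, m / k ^ (y + i) % k = m' / k ^ (y + i) % k) :
    onesBlock k L d y m = onesBlock k L d y m' := by
  unfold onesBlock
  exact if_congr (forall₂_congr fun i hi => by rw [h i hi]) rfl rfl

/-- A block of ones at positions `y, …, y + d - 1` forces `m ≥ k ^ (y + d - 1) ≥ y + d`. -/
lemma onesBlock_eq_zero_of_lt_add (hk : 2 ≤ k) {d y m : ℕ} (hd : 1 ≤ d) (hm : m < y + d) :
    onesBlock k L d y m = 0 := by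
  refine onesBlock_eq_zero_of_digit_eq_zero (i := d - 1) (by omega) ?_
  exact div_pow_mod_eq_zero_of_lt ((show m ≤ y + (d - 1) by omega).trans_lt (Nat.lt_pow_self hk))

theorem onesBlock_add_pow_mul (hk : 2 ≤ k) {A P : ℕ} (hA : A < k ^ P) (C : ℕ) {d : ℕ}
    (hd : 1 ≤ d) (y : ℕ) :
    onesBlock k L d y (A + k ^ (P + 1) * C) =
      onesBlock k L d y A + onesBlock k L d y (k ^ (P + 1) * C) := by
  have hk0 : 0 < k := by omega
  have hAP : ∀ z, P ≤ z → A / k ^ z % k = 0 := fun z hz =>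
    div_pow_mod_eq_zero_of_lt (hA.trans_le (Nat.pow_le_pow_right hk0 hz))
  by_cases hhigh : P + 1 ≤ y
  · rw [onesBlock_eq_zero_of_digit_eq_zero (i := 0) hd (hAP _ (by omega)), zero_add]
    exact onesBlock_congr fun i _ => by
      rw [add_pow_mul_div_pow_of_le hk0 C (hA.trans_le (Nat.pow_le_pow_right hk0 (by omega)))
        (by omega)]
  rw [onesBlock_eq_zero_of_digit_eq_zero (i := 0) hd (pow_mul_div_pow_mod_of_lt hk0 C (by omega)),
    add_zero]
  by_cases hlow : y + d ≤ P + 1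
  · exact onesBlock_congr fun i _ => add_pow_mul_div_pow_mod_of_lt hk0 A C (by omega)
  · have hAP' : A / k ^ (y + (P - y)) % k = 0 := hAP _ (by omega)
    have hXP : (A + k ^ (P + 1) * C) / k ^ (y + (P - y)) % k = 0 := by
      rw [add_pow_mul_div_pow_mod_of_lt hk0 A C (by omega), hAP']
    rw [onesBlock_eq_zero_of_digit_eq_zero (by omega) hXP,
      onesBlock_eq_zero_of_digit_eq_zero (by omega) hAP']

end OnesBlock

section OnesBlockSum

variable {k L : ℕ}

lemma onesBlockSum_eq_of_le (hk : 2 ≤ k) (μ : ℕ → ℕ → ZMod L) {m M : ℕ} (h : m ≤ M) :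
    onesBlockSum k L μ M m = onesBlockSum k L μ m m := by
  unfold onesBlockSum
  rw [← sum_product', ← sum_product']
  refine (sum_subset (product_subset_product (Icc_subset_Icc_right (by omega))
    (range_subset_range.2 (by omega))) fun p hp hp' => ?_).symm
  simp only [mem_product, mem_Icc, mem_range] at hp hp'
  rw [onesBlock_eq_zero_of_lt_add hk (by omega) (by omega), mul_zero]

lemma onesBlockSum_add_pow_mul (hk : 2 ≤ k) (μ : ℕ → ℕ → ZMod L) (M : ℕ) {A P : ℕ}
    (hA : A < k ^ P) (C : ℕ) :
    onesBlockSum k L μ M (A + k ^ (P + 1) * C) =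
      onesBlockSum k L μ M A + onesBlockSum k L μ M (k ^ (P + 1) * C) := by
  unfold onesBlockSum
  rw [← sum_add_distrib]
  refine sum_congr rfl fun d hd => ?_
  rw [← sum_add_distrib]
  refine sum_congr rfl fun y _ => ?_
  rw [onesBlock_add_pow_mul hk hA C (by simp at hd; omega), mul_add]

end OnesBlockSum

lemma add_mul_lt_pow_add {k : ℕ} (hk : 2 ≤ k) (N l n j : ℕ) (hj : j ≤ k ^ n) :
    N + l * j < k ^ (N + l + n) := by
  have hkn : 0 < k ^ n := pow_pos (by omega) n
  calc N + l * j ≤ N * k ^ n + l * k ^ n := by gcongr; exact Nat.le_mul_of_pos_right N hkn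
    _ = (N + l) * k ^ n := by ring
    _ < k ^ (N + l) * k ^ n := Nat.mul_lt_mul_of_pos_right (Nat.lt_pow_self hk) hkn
    _ = k ^ (N + l + n) := (pow_add k (N + l) n).symm

theorem onesBlockSum_split_general {k L : ℕ} (hk : 2 ≤ k)
    (μ : ℕ → ℕ → ZMod L) (a : ℕ → ZMod L)
    (haDef : ∀ m : ℕ, a m = ∑ d ∈ Finset.Icc 2 (m + 2), ∑ y ∈ Finset.range (m + 1),
      μ d y * onesBlock k L d y m) :
    ∀ N l n t : ℕ, 1 ≤ N → 1 ≤ l → 1 ≤ n → 1 ≤ t → ∀ j : ℕ, j ≤ k ^ n →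
      a (N + l * (k ^ (N + l + 1 + n) * t + j)) =
        a (N + l * j) + a (l * k ^ (N + l + 1 + n) * t) := by
  intro N l n t _ _ _ _ j hj
  have ha : ∀ m, a m = onesBlockSum k L μ m m := haDef
  have hX : N + l * (k ^ (N + l + 1 + n) * t + j) = N + l * j + k ^ (N + l + n + 1) * (l * t) := by
    ring
  have hB : l * k ^ (N + l + 1 + n) * t = k ^ (N + l + n + 1) * (l * t) := by ring
  rw [ha, ha, ha, hX, hB,
    onesBlockSum_add_pow_mul hk μ _ (add_mul_lt_pow_add hk N l n j hj),
    onesBlockSum_eq_of_le hk μ (Nat.le_add_right _ _),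
    onesBlockSum_eq_of_le hk μ (Nat.le_add_left _ _)]

/-- The sequence `a n ≡ ∑_{d ≥ 2} ∑_{y ≥ 0} μ d y · d(n; k^y + ⋯ + k^{y+d-1}) (mod L)`
(for each `n` only the terms with `d ≤ n + 2` and `y ≤ n` can be nonzero, so the
truncated sums below agree with the full sums) satisfies the splitting congruence
`a (N + l (k^{N+l+1+n} t + j)) ≡ a (N + l j) + a (l k^{N+l+1+n} t) (mod L)`
for all positive `N, l, n, t` and `0 ≤ j ≤ k^n`. -/
theorem onesBlockSum_split {k L : ℕ} (hk : 2 ≤ k) (hL : 2 ≤ L)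
    (μ : ℕ → ℕ → ZMod L) (a : ℕ → ZMod L)
    (haDef : ∀ m : ℕ, a m = ∑ d ∈ Finset.Icc 2 (m + 2), ∑ y ∈ Finset.range (m + 1),
      μ d y * onesBlock k L d y m) :
    ∀ N l n t : ℕ, 1 ≤ N → 1 ≤ l → 1 ≤ n → 1 ≤ t → ∀ j : ℕ, j ≤ k ^ n →
      a (N + l * (k ^ (N + l + 1 + n) * t + j)) =
        a (N + l * j) + a (l * k ^ (N + l + 1 + n) * t) :=
  onesBlockSum_split_general hk μ a haDef
end

section
/- Suppose f(z) ∈ K[[z]] and there exist power series f_y(z) ∈ K[[z]] with f_0 = f satisfying f_y(z) = Σ_{i=1}^{d} a_{y,i}(z) f_{y+i}(z^{k^i}) for all y ≥ 0, where the a_{y,i}(z) ∈ K[z] have degrees uniformly bounded by L. Choose s with k·s ≤ s + L ≤ k·s + k − 1. Then for all y ≥ 0 and 0 ≤ j ≤ s, the product z^j f_y(z) can be written as Σ_{i=1}^{d} Σ_{t=0}^{s} p_{t,i}(z) z^{k·t} f_{y+i}(z^{k^i}) with polynomials p_{t,i}(z) ∈ K[z] of degree at most k − 1. -/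
/-!
Multiply the recurrence for `f y` by `z^j`. Each coefficient `z^j a_{y,i}(z)` has degree at most
`s + L ≤ k (s + 1) - 1`, so splitting its exponents `n = k t + r` (`0 ≤ r < k`) into base-`k`
blocks writes it as `∑_{t ≤ s} p_{t,i}(z) z^{k t}` with `deg p_{t,i} ≤ k - 1`.
-/

/-- Substitution `z ↦ z^m` on formal power series, defined coefficientwise. -/
noncomputable def powSubst {K : Type*} [Field K] (m : ℕ) (f : PowerSeries K) :
    PowerSeries K :=
  PowerSeries.mk fun n => if m ∣ n then PowerSeries.coeff (R := K) (n / m) f else 0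

open Polynomial Finset

namespace Polynomial

variable {R : Type*} [Semiring R]

noncomputable def digitBlock (k t : ℕ) (q : R[X]) : R[X] :=
  ∑ r ∈ range k, C (q.coeff (k * t + r)) * X ^ r

theorem natDegree_digitBlock_le (k t : ℕ) (q : R[X]) : (digitBlock k t q).natDegree ≤ k - 1 :=
  natDegree_sum_le_of_forall_le _ _ fun r hr =>
    (natDegree_C_mul_X_pow_le _ r).trans (by simp only [mem_range] at hr; omega)

theorem sum_digitBlock_mul_X_pow {k n : ℕ} {q : R[X]} (hq : q.natDegree < k * n) :
    ∑ t ∈ range n, digitBlock k t q * X ^ (k * t) = q := by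
  have hk : 0 < k := Nat.pos_of_mul_pos_right (Nat.zero_lt_of_lt hq)
  have hblock : ∀ t, digitBlock k t q * X ^ (k * t) =
      ∑ r ∈ range k, monomial (k * t + r) (q.coeff (k * t + r)) := fun t => by
    simp only [digitBlock, sum_mul]
    refine sum_congr rfl fun r _ => ?_
    rw [mul_assoc, ← pow_add, C_mul_X_pow_eq_monomial, add_comm r]
  conv_rhs => rw [q.as_sum_range' _ hq]
  simp only [hblock, ← sum_product']
  refine sum_nbij' (fun p => k * p.1 + p.2) (fun n => (n / k, n % k)) ?_ ?_ ?_ ?_ fun _ _ => rfl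
  · rintro ⟨t, r⟩ h
    simp only [mem_product, mem_range] at h ⊢
    nlinarith
  · intro n hn
    simp only [mem_product, mem_range] at hn ⊢
    exact ⟨Nat.div_lt_of_lt_mul hn, Nat.mod_lt _ hk⟩
  · rintro ⟨t, r⟩ h
    simp only [mem_product, mem_range] at h
    simp [Nat.mul_add_div hk, Nat.div_eq_of_lt h.2, Nat.mod_eq_of_lt h.2]
  · intro n _
    simp [Nat.div_add_mod]

theorem coe_eq_sum_digitBlock_mul_X_pow {k n : ℕ} {q : R[X]} (hq : q.natDegree < k * n) :
    (q : PowerSeries R) =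
      ∑ t ∈ range n, (digitBlock k t q : PowerSeries R) * PowerSeries.X ^ (k * t) := by
  conv_lhs => rw [← sum_digitBlock_mul_X_pow hq]
  rw [← coeToPowerSeries.ringHom_apply, map_sum]
  simp only [map_mul, map_pow, coeToPowerSeries.ringHom_apply, coe_X]

end Polynomial

theorem chainMahler_decomposition_general {K : Type*} [Field K] {k d L s : ℕ} (hk : 2 ≤ k)
    (hs2 : s + L ≤ k * s + k - 1)
    (A : ℕ → ℕ → Polynomial K) (hA : ∀ y i, (A y i).natDegree ≤ L)
    (f : ℕ → PowerSeries K)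
    (hf : ∀ y : ℕ, f y = ∑ i ∈ Finset.range d,
      ((A y (i + 1) : Polynomial K) : PowerSeries K) * powSubst (k ^ (i + 1)) (f (y + i + 1))) :
    ∀ y : ℕ, ∀ j : ℕ, j ≤ s →
      ∃ p : ℕ → ℕ → Polynomial K, (∀ t i, (p t i).natDegree ≤ k - 1) ∧
        (PowerSeries.X : PowerSeries K) ^ j * f y =
          ∑ i ∈ Finset.range d, ∑ t ∈ Finset.range (s + 1),
            ((p t (i + 1) : Polynomial K) : PowerSeries K) * PowerSeries.X ^ (k * t) *
              powSubst (k ^ (i + 1)) (f (y + i + 1)) := by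
  intro y j hj
  refine ⟨fun t i => digitBlock k t (X ^ j * A y i), fun t i => natDegree_digitBlock_le .., ?_⟩
  rw [hf y, mul_sum]
  refine sum_congr rfl fun i _ => ?_
  have hdeg : (X ^ j * A y (i + 1)).natDegree < k * (s + 1) := by
    have hle : (X ^ j * A y (i + 1)).natDegree ≤ j + L :=
      natDegree_mul_le.trans (add_le_add (natDegree_X_pow_le j) (hA y (i + 1)))
    rw [mul_add_one]
    omega
  rw [← mul_assoc, ← sum_mul, ← coe_eq_sum_digitBlock_mul_X_pow hdeg, Polynomial.coe_mul,
    Polynomial.coe_pow, coe_X]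

/-- Key step for k-chain Mahler functions with uniformly bounded polynomial coefficients:
if `f y = ∑_{i=1}^d a_{y,i}(z) · f_{y+i}(z^{k^i})` with `deg a_{y,i} ≤ L`, and `s`
satisfies `k s ≤ s + L ≤ k s + k - 1`, then each `z^j f_y` (for `j ≤ s`) can be written
as `∑_{i=1}^d ∑_{t=0}^s p_{t,i}(z) z^{k t} f_{y+i}(z^{k^i})` with `deg p_{t,i} ≤ k - 1`. -/
theorem chainMahler_decomposition {K : Type*} [Field K] {k d L s : ℕ} (hk : 2 ≤ k)
    (hd : 1 ≤ d) (hs1 : k * s ≤ s + L) (hs2 : s + L ≤ k * s + k - 1)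
    (A : ℕ → ℕ → Polynomial K) (hA : ∀ y i, (A y i).natDegree ≤ L)
    (f : ℕ → PowerSeries K)
    (hf : ∀ y : ℕ, f y = ∑ i ∈ Finset.range d,
      ((A y (i + 1) : Polynomial K) : PowerSeries K) * powSubst (k ^ (i + 1)) (f (y + i + 1))) :
    ∀ y : ℕ, ∀ j : ℕ, j ≤ s →
      ∃ p : ℕ → ℕ → Polynomial K, (∀ t i, (p t i).natDegree ≤ k - 1) ∧
        (PowerSeries.X : PowerSeries K) ^ j * f y =
          ∑ i ∈ Finset.range d, ∑ t ∈ Finset.range (s + 1),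
            ((p t (i + 1) : Polynomial K) : PowerSeries K) * PowerSeries.X ^ (k * t) *
              powSubst (k ^ (i + 1)) (f (y + i + 1)) :=
  chainMahler_decomposition_general hk hs2 A hA f hf
end
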